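/- Augmented-distribution lemma from the proof of the list matching lemma: flatten the common randomness into T_{j+(k−1)N} = S_j^(k) for j ∈ {1,…,N} and k ∈ {1,…,K}, so that T_1, …, T_{KN} are i.i.d. Exp(1). Define the augmented target distribution q̃ on {1,…,KN} by q̃_{j+(k−1)N} = q_j/K, and set Ỹ = argmin_{1≤i≤KN} T_i/q̃_i. Then: (a) for every j ∈ {1,…,N} and k ∈ {1,…,K}, Pr[Ỹ = j + (k−1)N] = q_j/K; and (b) for every j ∈ {1,…,N}, Pr[Ỹ = j and X^(1) = j] = 1 / ( Σ_{i=1}^{N} [ max{ q_i/q_j , p_i/p_j } + (K − 1)·q_i/q_j ] ), where X^(1) = argmin_{1≤i≤N} S_i^(1)/p_i = argmin_{1≤i≤N} T_i/p_i. -/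

import Mathlib

/-!
If `T l` are i.i.d. `Exp(θ)` and `r l ≥ 0`, then conditionally on `T l₀ = t ≥ 0` the event
`∀ l ≠ l₀, r l * T l₀ < T l` has probability `exp (-θ t ∑_{l ≠ l₀} r l)`; integrating against the
law of `T l₀` gives `1 / (1 + ∑_{l ≠ l₀} r l)`. Part (a) is such a race with `r l = q̃ l / q̃ l₀`.
For part (b), since `T l₀ ≥ 0`, the two argmin conditions `Ỹ = (j, 1)` and `X¹ = j` merge into a
single race whose weight at `(i, 1)` is `max (q i / q j) (p i / p j)` and at `(i, k)`, `k ≠ 1`,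
is `q i / q j`.
-/

open MeasureTheory ProbabilityTheory Real Set Finset

section Exponential

lemma expMeasure_Iio_zero (r : ℝ) : expMeasure r (Iio 0) = 0 := by
  rw [expMeasure, gammaMeasure, withDensity_apply _ measurableSet_Iio]
  exact lintegral_gammaPDF_of_nonpos le_rfl

lemma ae_nonneg_expMeasure (r : ℝ) : ∀ᵐ t ∂expMeasure r, 0 ≤ t := by
  rw [ae_iff]
  simp only [not_le]
  exact expMeasure_Iio_zero r

lemma expMeasure_Ioi {r : ℝ} (hr : 0 < r) {a : ℝ} (ha : 0 ≤ a) :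
    expMeasure r (Ioi a) = ENNReal.ofReal (exp (-(r * a))) := by
  have := isProbabilityMeasure_expMeasure hr
  have hexp_le : exp (-(r * a)) ≤ 1 := exp_le_one_iff.mpr (by nlinarith)
  rw [← compl_Iic, prob_compl_eq_one_sub measurableSet_Iic, ← ofReal_cdf, cdf_expMeasure_eq hr,
    if_pos ha, ← ENNReal.ofReal_one, ← ENNReal.ofReal_sub _ (by linarith), sub_sub_cancel]

lemma lintegral_exp_neg_mul_expMeasure {r : ℝ} (hr : 0 ≤ r) {c : ℝ} (hrc : 0 < r + c) :
    ∫⁻ t, ENNReal.ofReal (exp (-(c * t))) ∂expMeasure r = ENNReal.ofReal (r / (r + c)) := by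
  have hdensity : ∀ t, exponentialPDF r t * ENNReal.ofReal (exp (-(c * t)))
      = ENNReal.ofReal (r / (r + c)) * exponentialPDF (r + c) t := by
    intro t
    rcases lt_or_ge t 0 with ht | ht
    · simp [exponentialPDF_of_neg ht]
    · rw [exponentialPDF_of_nonneg ht, exponentialPDF_of_nonneg ht,
        ← ENNReal.ofReal_mul (by positivity), ← ENNReal.ofReal_mul (by positivity), mul_assoc,
        ← exp_add]
      field_simp
      ring_nf
  change ∫⁻ t, _ ∂volume.withDensity (exponentialPDF r) = _
  have hmeas : ∀ s, Measurable (exponentialPDF s) :=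
    fun s => (measurable_exponentialPDFReal s).ennreal_ofReal
  rw [lintegral_withDensity_eq_lintegral_mul _ (hmeas r) (by fun_prop)]
  simp only [Pi.mul_apply, hdensity]
  rw [lintegral_const_mul _ (hmeas _), lintegral_exponentialPDF_eq_one hrc, mul_one]

end Exponential

lemma eq_iff_forall_ne_lt_of_forall_ne_lt {α ι : Type*} [Preorder α] {f : ι → α} {y : ι}
    (hy : ∀ l ≠ y, f y < f l) (l₀ : ι) : y = l₀ ↔ ∀ l ≠ l₀, f l₀ < f l := by
  refine ⟨fun h => h ▸ hy, fun h => ?_⟩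
  by_contra hne
  exact lt_asymm (hy l₀ (Ne.symm hne)) (h y hne)

lemma eq_iff_forall_ne_div_mul_lt {ι : Type*} {T w : ι → ℝ} (hw : ∀ l, 0 < w l) {y : ι}
    (hy : ∀ l ≠ y, T y / w y < T l / w l) (l₀ : ι) :
    y = l₀ ↔ ∀ l ≠ l₀, w l / w l₀ * T l₀ < T l := by
  rw [eq_iff_forall_ne_lt_of_forall_ne_lt (f := fun l => T l / w l) hy]
  refine forall₂_congr fun l _ => ?_
  rw [div_lt_div_iff₀ (hw l₀) (hw l), div_mul_eq_mul_div, div_lt_iff₀ (hw l₀), mul_comm (T l₀)]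

section ExponentialRace

variable {Ω ι : Type*} [MeasurableSpace Ω] {μ : Measure Ω} {T : ι → Ω → ℝ} {θ : ℝ}

lemma measure_forall_lt_of_iIndepFun_expMeasure (hθ : 0 < θ) (hindep : iIndepFun T μ)
    (hexp : ∀ l, μ.map (T l) = expMeasure θ) (hT : ∀ l, Measurable (T l)) (s : Finset ι)
    {a : ι → ℝ} (ha : ∀ l ∈ s, 0 ≤ a l) :
    μ {ω | ∀ l ∈ s, a l < T l ω} = ENNReal.ofReal (exp (-(θ * ∑ l ∈ s, a l))) := by
  have hset : {ω | ∀ l ∈ s, a l < T l ω} = ⋂ l ∈ s, T l ⁻¹' Ioi (a l) := by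
    ext ω
    simp
  rw [hset, hindep.measure_inter_preimage_eq_mul s fun l _ => measurableSet_Ioi, mul_sum,
    neg_eq_neg_one_mul, mul_sum, exp_sum, ENNReal.ofReal_prod_of_nonneg fun l _ => (exp_pos _).le]
  refine prod_congr rfl fun l hl => ?_
  rw [← Measure.map_apply (hT l) measurableSet_Ioi, hexp l, expMeasure_Ioi hθ (ha l hl),
    neg_one_mul]

variable [Fintype ι]

theorem measure_forall_ne_mul_lt_of_iIndepFun_expMeasure [IsFiniteMeasure μ] (hθ : 0 < θ)
    (hindep : iIndepFun T μ) (hexp : ∀ l, μ.map (T l) = expMeasure θ) (hT : ∀ l, Measurable (T l))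
    (l₀ : ι) {r : ι → ℝ} (hr : ∀ l, 0 ≤ r l) (hr₀ : r l₀ = 1) :
    μ {ω | ∀ l ≠ l₀, r l * T l₀ ω < T l ω} = ENNReal.ofReal (1 / ∑ l, r l) := by
  classical
  set s := univ.erase l₀
  set g : Ω → s → ℝ := fun ω l => T l ω
  have hg : Measurable g := measurable_pi_lambda _ fun l => hT l
  have hind : IndepFun (T l₀) g μ :=
    (hindep.indepFun_finset {l₀} s (disjoint_singleton_left.mpr (notMem_erase l₀ _)) hT).comp
      (φ := fun x : ({l₀} : Finset ι) → ℝ => x ⟨l₀, mem_singleton_self l₀⟩) (ψ := id)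
      (measurable_pi_apply _) measurable_id
  set C : Set (ℝ × (s → ℝ)) := {x | ∀ l : s, r l * x.1 < x.2 l}
  have hC : MeasurableSet C := by
    simp only [C, ofPred_forall]
    exact .iInter fun l =>
      measurableSet_lt (measurable_fst.const_mul _) ((measurable_pi_apply l).comp measurable_snd)
  have hslice : ∀ t, 0 ≤ t →
      μ.map g (Prod.mk t ⁻¹' C) = ENNReal.ofReal (exp (-((θ * ∑ l ∈ s, r l) * t))) := by
    intro t ht
    rw [Measure.map_apply hg (measurable_prodMk_left hC), mul_assoc, sum_mul,
      ← measure_forall_lt_of_iIndepFun_expMeasure hθ hindep hexp hT s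
        fun l _ => mul_nonneg (hr l) ht]
    congr 1
    ext ω
    simp [C, g]
  calc μ {ω | ∀ l ≠ l₀, r l * T l₀ ω < T l ω}
      = μ.map (fun ω => (T l₀ ω, g ω)) C := by
        rw [Measure.map_apply ((hT l₀).prodMk hg) hC]
        congr 1
        ext ω
        simp [C, g, s]
    _ = ∫⁻ t, μ.map g (Prod.mk t ⁻¹' C) ∂expMeasure θ := by
        rw [hind.map_prod_eq_prod_map_map (hT l₀).aemeasurable hg.aemeasurable,
          Measure.prod_apply hC, hexp]
    _ = ∫⁻ t, ENNReal.ofReal (exp (-((θ * ∑ l ∈ s, r l) * t))) ∂expMeasure θ :=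
        lintegral_congr_ae <| (ae_nonneg_expMeasure θ).mono hslice
    _ = ENNReal.ofReal (1 / ∑ l, r l) := by
        have hs : 0 ≤ ∑ l ∈ s, r l := sum_nonneg fun l _ => hr l
        have hsum : ∑ l, r l = 1 + ∑ l ∈ s, r l := by rw [← add_sum_erase _ _ (mem_univ l₀), hr₀]
        rw [lintegral_exp_neg_mul_expMeasure hθ.le (by positivity), hsum]
        congr 1
        field_simp

theorem measure_argmin_eq_of_iIndepFun_expMeasure [IsFiniteMeasure μ] (hθ : 0 < θ)
    (hindep : iIndepFun T μ) (hexp : ∀ l, μ.map (T l) = expMeasure θ) (hT : ∀ l, Measurable (T l))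
    {w : ι → ℝ} (hw : ∀ l, 0 < w l) {Y : Ω → ι}
    (hY : ∀ᵐ ω ∂μ, ∀ l ≠ Y ω, T (Y ω) ω / w (Y ω) < T l ω / w l) (l₀ : ι) :
    μ {ω | Y ω = l₀} = ENNReal.ofReal (w l₀ / ∑ l, w l) := by
  have hevent : {ω | Y ω = l₀} =ᵐ[μ] {ω | ∀ l ≠ l₀, w l / w l₀ * T l₀ ω < T l ω} := by
    filter_upwards [hY] with ω hω
    exact propext (eq_iff_forall_ne_div_mul_lt (T := fun l => T l ω) hw hω l₀)
  rw [measure_congr hevent, measure_forall_ne_mul_lt_of_iIndepFun_expMeasure hθ hindep hexp hT l₀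
    (fun l => (div_pos (hw l) (hw l₀)).le) (div_self (hw l₀).ne'), ← sum_div, one_div_div]

end ExponentialRace

lemma forall_ne_mul_lt_and_forall_ne_mul_lt_iff {κ K : Type*} [DecidableEq K] {a b : κ → ℝ}
    {T : κ × K → ℝ} {t : ℝ} (ht : 0 ≤ t) (j : κ) (k₀ : K) :
    ((∀ l ≠ (j, k₀), a l.1 * t < T l) ∧ ∀ i ≠ j, b i * t < T (i, k₀)) ↔
      ∀ l ≠ (j, k₀), (if l.2 = k₀ then max (a l.1) (b l.1) else a l.1) * t < T l := by
  constructor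
  · rintro ⟨ha, hb⟩ ⟨i, k⟩ hl
    split_ifs with hk
    · subst hk
      rw [max_mul_of_nonneg _ _ ht, max_lt_iff]
      exact ⟨ha _ hl, hb i fun hi => hl (hi ▸ rfl)⟩
    · exact ha _ hl
  · intro h
    refine ⟨fun l hl => (mul_le_mul_of_nonneg_right ?_ ht).trans_lt (h l hl),
      fun i hi => (mul_le_mul_of_nonneg_right ?_ ht).trans_lt (h (i, k₀) (by simpa using hi))⟩
    · split_ifs
      exacts [le_max_left _ _, le_rfl]
    · rw [if_pos rfl]
      exact le_max_right _ _

lemma sum_ite_eq_add_card_sub_one_mul {R K : Type*} [CommRing R] [Fintype K] [DecidableEq K]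
    (k₀ : K) (x y : R) :
    ∑ k, (if k = k₀ then x else y) = x + ((Fintype.card K : R) - 1) * y := by
  rw [← add_sum_erase _ _ (mem_univ k₀), if_pos rfl,
    sum_congr rfl fun k hk => if_neg (ne_of_mem_erase hk), sum_const,
    card_erase_of_mem (mem_univ _), card_univ, nsmul_eq_mul, Nat.cast_pred (Fintype.card_pos_iff.mpr ⟨k₀⟩)]

theorem gls_augmented_distribution_lemma_general
    {Ω : Type*} [MeasurableSpace Ω] (μ : Measure Ω) [IsProbabilityMeasure μ]
    (N K : ℕ) (hK : 0 < K)
    (p q : Fin N → ℝ) (hp : ∀ i, 0 < p i) (hq : ∀ i, 0 < q i)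
    (hqsum : ∑ i, q i = 1)
    (S : Fin N → Fin K → Ω → ℝ) (hSmeas : ∀ i k, Measurable (S i k))
    (hSindep : iIndepFun
      (fun ik : Fin N × Fin K => S ik.1 ik.2) μ)
    (hSexp : ∀ i k, μ.map (S i k) = expMeasure 1)
    (Ytilde : Ω → Fin N × Fin K)
    (X1 : Ω → Fin N)
    -- `Ỹ` is a.s. the unique argmin of `(i,k) ↦ S i k / q̃ (i,k)` with `q̃ (i,k) = q i / K`
    (hYt : ∀ᵐ ω ∂μ, ∀ ik : Fin N × Fin K, ik ≠ Ytilde ω →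
      S (Ytilde ω).1 (Ytilde ω).2 ω / (q (Ytilde ω).1 / K) < S ik.1 ik.2 ω / (q ik.1 / K))
    -- `X 1` is a.s. the unique argmin of `i ↦ S i 1 / p i` (first proposal set)
    (hX1 : ∀ᵐ ω ∂μ, ∀ i : Fin N, i ≠ X1 ω →
      S (X1 ω) ⟨0, hK⟩ ω / p (X1 ω) < S i ⟨0, hK⟩ ω / p i) :
    (∀ (j : Fin N) (k : Fin K),
        μ {ω | Ytilde ω = (j, k)} = ENNReal.ofReal (q j / K)) ∧
      (∀ j : Fin N,
        μ {ω | Ytilde ω = (j, ⟨0, hK⟩) ∧ X1 ω = j}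
          = ENNReal.ofReal (1 /
              ∑ i : Fin N, (max (q i / q j) (p i / p j) + ((K : ℝ) - 1) * (q i / q j)))) := by
  have hK' : (0 : ℝ) < K := Nat.cast_pos.mpr hK
  have hw : ∀ l : Fin N × Fin K, 0 < q l.1 / K := fun l => div_pos (hq l.1) hK'
  have hrace := measure_forall_ne_mul_lt_of_iIndepFun_expMeasure one_pos hSindep
    (fun l => hSexp l.1 l.2) (fun l => hSmeas l.1 l.2)
  refine ⟨fun j k => ?_, fun j => ?_⟩
  · have hwsum : ∑ l : Fin N × Fin K, q l.1 / K = 1 := by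
      simp only [Fintype.sum_prod_type, sum_const, card_univ, Fintype.card_fin, nsmul_eq_mul,
        mul_div_cancel₀ _ hK'.ne', hqsum]
    rw [measure_argmin_eq_of_iIndepFun_expMeasure one_pos hSindep (fun l => hSexp l.1 l.2)
      (fun l => hSmeas l.1 l.2) hw hYt, hwsum, div_one]
  set k₀ : Fin K := ⟨0, hK⟩
  set r : Fin N × Fin K → ℝ := fun l =>
    if l.2 = k₀ then max (q l.1 / q j) (p l.1 / p j) else q l.1 / q j
  have hS₀ : ∀ᵐ ω ∂μ, 0 ≤ S j k₀ ω :=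
    ae_of_ae_map (hSmeas j k₀).aemeasurable (hSexp j k₀ ▸ ae_nonneg_expMeasure 1)
  have hevent : {ω | Ytilde ω = (j, k₀) ∧ X1 ω = j}
      =ᵐ[μ] {ω | ∀ l ≠ (j, k₀), r l * S j k₀ ω < S l.1 l.2 ω} := by
    filter_upwards [hYt, hX1, hS₀] with ω hY hX h₀
    refine propext (show _ ∧ _ ↔ _ from ?_)
    rw [eq_iff_forall_ne_div_mul_lt (T := fun l => S l.1 l.2 ω) hw hY,
      eq_iff_forall_ne_div_mul_lt (T := fun i => S i k₀ ω) hp hX]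
    simp only [div_div_div_cancel_right₀ hK'.ne']
    exact forall_ne_mul_lt_and_forall_ne_mul_lt_iff (a := fun i => q i / q j)
      (b := fun i => p i / p j) (T := fun l => S l.1 l.2 ω) h₀ j k₀
  have hr : ∀ l, 0 ≤ r l := fun l => by
    have := div_pos (hq l.1) (hq j)
    simp only [r]
    split_ifs <;> positivity
  rw [measure_congr hevent, hrace _ hr (by simp [r, (hq j).ne', (hp j).ne']),
    Fintype.sum_prod_type]
  simp only [r, sum_ite_eq_add_card_sub_one_mul, Fintype.card_fin]

/-- **Augmented-distribution lemma from the proof of the list matching lemma.**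
Flatten the common randomness `S j k` (i.i.d. `Exp(1)`) into a single family indexed
by pairs `(j, k)` (corresponding to the flattened index `j + (k-1)N`), and define the
augmented target distribution `q̃ (j,k) = q j / K` on the extended alphabet.  Let
`Ỹ` be the a.s.-unique argmin of `(i,k) ↦ S i k / (q i / K)`.  Then
(a) `Pr[Ỹ = (j,k)] = q j / K` for all `j, k`; and
(b) for all `j`, `Pr[Ỹ = (j,1) ∧ X 1 = j] =
    1 / ∑ i (max (q i / q j) (p i / p j) + (K-1) * q i / q j)`,
where `X 1 = argmin_i S i 1 / p i` (here `1` denotes the first of the `K` indices,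
so `(j,1)` corresponds to the flattened index `j ∈ {1,…,N}`). -/
theorem gls_augmented_distribution_lemma
    {Ω : Type*} [MeasurableSpace Ω] (μ : Measure Ω) [IsProbabilityMeasure μ]
    (N K : ℕ) (hN : 0 < N) (hK : 0 < K)
    (p q : Fin N → ℝ) (hp : ∀ i, 0 < p i) (hq : ∀ i, 0 < q i)
    (hpsum : ∑ i, p i = 1) (hqsum : ∑ i, q i = 1)
    (S : Fin N → Fin K → Ω → ℝ) (hSmeas : ∀ i k, Measurable (S i k))
    (hSindep : iIndepFun
      (fun ik : Fin N × Fin K => S ik.1 ik.2) μ)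
    (hSexp : ∀ i k, μ.map (S i k) = expMeasure 1)
    (Ytilde : Ω → Fin N × Fin K) (hYtmeas : Measurable Ytilde)
    (X1 : Ω → Fin N) (hX1meas : Measurable X1)
    -- `Ỹ` is a.s. the unique argmin of `(i,k) ↦ S i k / q̃ (i,k)` with `q̃ (i,k) = q i / K`
    (hYt : ∀ᵐ ω ∂μ, ∀ ik : Fin N × Fin K, ik ≠ Ytilde ω →
      S (Ytilde ω).1 (Ytilde ω).2 ω / (q (Ytilde ω).1 / K) < S ik.1 ik.2 ω / (q ik.1 / K))
    -- `X 1` is a.s. the unique argmin of `i ↦ S i 1 / p i` (first proposal set)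
    (hX1 : ∀ᵐ ω ∂μ, ∀ i : Fin N, i ≠ X1 ω →
      S (X1 ω) ⟨0, hK⟩ ω / p (X1 ω) < S i ⟨0, hK⟩ ω / p i) :
    (∀ (j : Fin N) (k : Fin K),
        μ {ω | Ytilde ω = (j, k)} = ENNReal.ofReal (q j / K)) ∧
      (∀ j : Fin N,
        μ {ω | Ytilde ω = (j, ⟨0, hK⟩) ∧ X1 ω = j}
          = ENNReal.ofReal (1 /
              ∑ i : Fin N, (max (q i / q j) (p i / p j) + ((K : ℝ) - 1) * (q i / q j)))) :=
  gls_augmented_distribution_lemma_general μ N K hK p q hp hq hqsum S hSmeas hSindep hSexp Ytilde X1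
    hYt hX1
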